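/- arXiv:2408.13524 — 2 statements merged into one kernel-verified Lean document; each statement's English description precedes it below -/
import Mathlib

section
/- For all positive reals a, b, c, one has a + b - 2ab/c ≤ √((a-b)² + ac). -/
theorem abc_inequality (a b c : ℝ) (ha : 0 < a) (hb : 0 < b) (hc : 0 < c) :
    a + b - 2 * a * b / c ≤ Real.sqrt ((a - b) ^ 2 + a * c) := by
  rcases le_or_gt (a + b - 2 * a * b / c) 0 with h | h
  · exact h.trans (Real.sqrt_nonneg _)
  · rw [← Real.sqrt_sq h.le]
    apply Real.sqrt_le_sqrt
    have h2 : 2 * a * b < (a + b) * c := by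
      have hlt : 2 * a * b / c < a + b := by linarith
      calc 2 * a * b = (2 * a * b / c) * c := by field_simp
        _ < (a + b) * c := by nlinarith
    have key : ((a + b) * c - 2 * a * b) ^ 2 ≤ ((a - b) ^ 2 + a * c) * c ^ 2 := by
      rcases le_or_gt b c with hbc | hbc
      · nlinarith [mul_nonneg (mul_nonneg ha.le hc.le) (sq_nonneg (c - 2*b)),
          mul_nonneg (mul_nonneg (mul_nonneg ha.le ha.le) hb.le) (sub_nonneg.2 hbc)]
      · have h2b : 0 < 2 * b - c := by linarith
        have step1 : (4*a*b*(b-c)) * (2*b-c) ≤ (4*b^2*c*(b-c)) := by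
          nlinarith [mul_nonneg (mul_nonneg (by linarith : (0:ℝ) ≤ 4*b) (by linarith : (0:ℝ) ≤ b - c)) (by linarith : (0:ℝ) ≤ b*c - a*(2*b-c))]
        have step2 : 4*b^2*c*(b-c) ≤ (c*(2*b-c)^2) * (2*b-c) := by
          nlinarith [mul_nonneg (mul_nonneg hc.le (by linarith : (0:ℝ) ≤ b - c)) (sq_nonneg (2*b-c)),
            mul_nonneg (mul_nonneg hc.le (by linarith : (0:ℝ) ≤ b - c)) (sq_nonneg c),
            mul_pos hc (mul_pos hc hc)]
        have step3 : 4*a*b*(b-c) ≤ c*(2*b-c)^2 :=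
          le_of_mul_le_mul_right (step1.trans step2) h2b
        nlinarith [mul_nonneg ha.le (sub_nonneg.2 step3)]
    have e2 : (a + b - 2 * a * b / c) ^ 2 * c ^ 2 = ((a + b) * c - 2 * a * b) ^ 2 := by
      field_simp
    have key2 : (a + b - 2 * a * b / c) ^ 2 * c ^ 2 ≤ ((a - b) ^ 2 + a * c) * c ^ 2 := by
      rw [e2]; exact key
    exact le_of_mul_le_mul_right key2 (by positivity : (0:ℝ) < c ^ 2)
end

section
/- Let X be a Banach space with norm ‖·‖, let [u,v] := inf_{λ>0}(‖u+λv‖−‖u‖)/λ, and let A ⊆ X×X satisfy [u−û, v−v̂] + ω‖u−û‖ ≥ 0 for all (u,v),(û,v̂) ∈ A (A is accretive of type ω). Suppose h, ĥ > 0, and u₀,u₁,û₀,û₁,f,f̂ ∈ X satisfy (u₁, f − (u₁−u₀)/h) ∈ A and (û₁, f̂ − (û₁−û₀)/ĥ) ∈ A. Then (1 − min(h,ĥ)·ω)·‖u₁−û₁‖ ≤ (1 − ĥ/h)⁺‖u₁−û₀‖ + (1 − h/ĥ)⁺‖u₀−û₁‖ + (min(h,ĥ)/max(h,ĥ))‖u₀−û₀‖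 + min(h,ĥ)·[u₁−û₁, f−f̂]. -/
/-!
Write `w = u₁ - v₁` and, for `h' ≤ h`, expand the difference of the two resolvent pairs as
`(f - f') + y - h'⁻¹ • w` with `y = (h'⁻¹ - h⁻¹) • (u₁ - v₀) + h⁻¹ • (u₀ - v₀)`.
The bracket `[w, ·]` is `1`-Lipschitz in its second argument and satisfies
`[w, z - b • w] ≤ [w, z] - b ‖w‖` for `b ≥ 0`, so accretivity of type `ω` yields
`h'⁻¹ ‖w‖ ≤ [w, f - f'] + ‖y‖ + ω ‖w‖`; multiplying by `h'` and applying the triangle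
inequality to `y` gives the estimate. The case `h ≤ h'` follows by exchanging the two steps,
since `[-u, -v] = [u, v]`.
-/

open Set

section

variable {X : Type*} [NormedAddCommGroup X] [NormedSpace ℝ X]

noncomputable def normBracket (u v : X) : ℝ :=
  sInf ((fun l : ℝ => (‖u + l • v‖ - ‖u‖) / l) '' Ioi 0)

lemma bddBelow_normBracket_quotients (u v : X) :
    BddBelow ((fun l : ℝ => (‖u + l • v‖ - ‖u‖) / l) '' Ioi 0) := by
  refine ⟨-‖v‖, ?_⟩
  rintro _ ⟨l, hl : 0 < l, rfl⟩
  rw [le_div_iff₀ hl]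
  have := norm_sub_norm_le u (u + l • v)
  rw [sub_add_cancel_left, norm_neg, norm_smul, Real.norm_of_nonneg hl.le] at this
  linarith

lemma normBracket_le_quotient (u v : X) {l : ℝ} (hl : 0 < l) :
    normBracket u v ≤ (‖u + l • v‖ - ‖u‖) / l :=
  csInf_le (bddBelow_normBracket_quotients u v) ⟨l, hl, rfl⟩

lemma le_normBracket_of_forall_le_quotient {u v : X} {c : ℝ}
    (H : ∀ l : ℝ, 0 < l → c ≤ (‖u + l • v‖ - ‖u‖) / l) : c ≤ normBracket u v :=
  le_csInf ⟨_, 1, mem_Ioi.2 one_pos, rfl⟩ (by rintro _ ⟨l, hl, rfl⟩; exact H l hl)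

lemma normBracket_neg_neg (u v : X) : normBracket (-u) (-v) = normBracket u v := by
  simp only [normBracket, smul_neg, ← neg_add, norm_neg]

lemma normBracket_add_le (u v y : X) : normBracket u (v + y) ≤ normBracket u v + ‖y‖ := by
  rw [← sub_le_iff_le_add]
  refine le_normBracket_of_forall_le_quotient fun l hl => ?_
  rw [sub_le_iff_le_add, div_add' _ _ _ hl.ne']
  refine (normBracket_le_quotient u (v + y) hl).trans (div_le_div_of_nonneg_right ?_ hl.le)
  calc ‖u + l • (v + y)‖ - ‖u‖ ≤ ‖u + l • v‖ + ‖l • y‖ - ‖u‖ := by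
        rw [smul_add, ← add_assoc]; linarith [norm_add_le (u + l • v) (l • y)]
    _ = _ := by rw [norm_smul, Real.norm_of_nonneg hl.le]; ring

/-- The difference quotient of `(u, v - b • u)` at `μ / (1 + μ b)` is that of `(u, v)` at `μ`,
shifted by `-b ‖u‖`. -/
lemma normBracket_sub_smul_self_le (u v : X) {b : ℝ} (hb : 0 ≤ b) :
    normBracket u (v - b • u) ≤ normBracket u v - b * ‖u‖ := by
  rw [le_sub_iff_add_le]
  refine le_normBracket_of_forall_le_quotient fun μ hμ => ?_
  have hc : 0 < 1 + μ * b := by positivity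
  have hvec : u + (μ / (1 + μ * b)) • (v - b • u) = (1 + μ * b)⁻¹ • (u + μ • v) := by
    match_scalars <;> field_simp; ring
  have := normBracket_le_quotient u (v - b • u) (div_pos hμ hc)
  rw [hvec, norm_smul, Real.norm_of_nonneg (inv_pos.2 hc).le] at this
  calc normBracket u (v - b • u) + b * ‖u‖
      ≤ ((1 + μ * b)⁻¹ * ‖u + μ • v‖ - ‖u‖) / (μ / (1 + μ * b)) + b * ‖u‖ := by gcongr
    _ = (‖u + μ • v‖ - ‖u‖) / μ := by field_simp; ring

def IsAccretiveOfType (ω : ℝ) (A : Set (X × X)) : Prop :=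
  ∀ p ∈ A, ∀ q ∈ A, 0 ≤ normBracket (p.1 - q.1) (p.2 - q.2) + ω * ‖p.1 - q.1‖

lemma IsAccretiveOfType.euler_step_comparison_of_le {ω : ℝ} {A : Set (X × X)}
    (hA : IsAccretiveOfType ω A) {h h' : ℝ} (hh : 0 < h) (hh' : 0 < h') (hle : h' ≤ h)
    {u₀ u₁ v₀ v₁ f f' : X}
    (hu : (u₁, f - h⁻¹ • (u₁ - u₀)) ∈ A) (hv : (v₁, f' - h'⁻¹ • (v₁ - v₀)) ∈ A) :
    (1 - h' * ω) * ‖u₁ - v₁‖ ≤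
      (1 - h' / h) * ‖u₁ - v₀‖ + (h' / h) * ‖u₀ - v₀‖ + h' * normBracket (u₁ - v₁) (f - f') := by
  have hinv : h⁻¹ ≤ h'⁻¹ := inv_anti₀ hh' hle
  set y := (h'⁻¹ - h⁻¹) • (u₁ - v₀) + h⁻¹ • (u₀ - v₀)
  have hdiff : (f - h⁻¹ • (u₁ - u₀)) - (f' - h'⁻¹ • (v₁ - v₀))
      = (f - f') + y - h'⁻¹ • (u₁ - v₁) := by module
  have hy : ‖y‖ ≤ (h'⁻¹ - h⁻¹) * ‖u₁ - v₀‖ + h⁻¹ * ‖u₀ - v₀‖ := by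
    refine (norm_add_le _ _).trans_eq ?_
    rw [norm_smul, norm_smul, Real.norm_of_nonneg (sub_nonneg.2 hinv),
      Real.norm_of_nonneg (inv_pos.2 hh).le]
  have hacc := hA _ hu _ hv
  rw [hdiff] at hacc
  have hbound : h'⁻¹ * ‖u₁ - v₁‖ ≤ normBracket (u₁ - v₁) (f - f') +
      ((h'⁻¹ - h⁻¹) * ‖u₁ - v₀‖ + h⁻¹ * ‖u₀ - v₀‖) + ω * ‖u₁ - v₁‖ := by
    linarith [normBracket_sub_smul_self_le (u₁ - v₁) ((f - f') + y) (inv_pos.2 hh').le,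
      normBracket_add_le (u₁ - v₁) (f - f') y]
  have := mul_le_mul_of_nonneg_left hbound hh'.le
  field_simp at this ⊢
  linarith

end

theorem euler_step_comparison {X : Type*} [NormedAddCommGroup X] [NormedSpace ℝ X]
    (bracket : X → X → ℝ)
    (hbracket : ∀ u v : X,
      bracket u v = sInf ((fun l : ℝ => (‖u + l • v‖ - ‖u‖) / l) '' Set.Ioi 0))
    (ω : ℝ) (A : Set (X × X))
    (hA : ∀ p ∈ A, ∀ q ∈ A,
      bracket (p.1 - q.1) (p.2 - q.2) + ω * ‖p.1 - q.1‖ ≥ 0)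
    (h h' : ℝ) (hh : 0 < h) (hh' : 0 < h')
    (u₀ u₁ v₀ v₁ f f' : X)
    (hu : (u₁, f - h⁻¹ • (u₁ - u₀)) ∈ A)
    (hv : (v₁, f' - h'⁻¹ • (v₁ - v₀)) ∈ A) :
    (1 - min h h' * ω) * ‖u₁ - v₁‖ ≤
      max (1 - h' / h) 0 * ‖u₁ - v₀‖ + max (1 - h / h') 0 * ‖u₀ - v₁‖ +
        (min h h' / max h h') * ‖u₀ - v₀‖ +
        min h h' * bracket (u₁ - v₁) (f - f') := by
  obtain rfl : bracket = normBracket := funext₂ hbracket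
  have hA : IsAccretiveOfType ω A := hA
  rcases le_total h' h with hle | hle
  · have H := hA.euler_step_comparison_of_le hh hh' hle hu hv
    rw [min_eq_right hle, max_eq_left hle, max_eq_left (sub_nonneg.2 ((div_le_one hh).2 hle)),
      max_eq_right (sub_nonpos.2 ((one_le_div hh').2 hle))]
    linarith
  · have H := hA.euler_step_comparison_of_le hh' hh hle hv hu
    rw [← normBracket_neg_neg, neg_sub, neg_sub, norm_sub_rev v₁, norm_sub_rev v₁,
      norm_sub_rev v₀] at H
    rw [min_eq_left hle, max_eq_right hle, max_eq_left (sub_nonneg.2 ((div_le_one hh').2 hle)),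
      max_eq_right (sub_nonpos.2 ((one_le_div hh).2 hle))]
    linarith
end
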